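/- arXiv:2410.20760 — 5 statements merged into one kernel-verified Lean document; each statement's English description precedes it below -/
import Mathlib

section
/- Let X be a Polish (complete separable metric) space with its Borel σ-algebra, and let H be a reproducing kernel Hilbert space of real-valued functions on X that is universal, i.e., for every bounded continuous g : X → ℝ and every η > 0 there exists h ∈ H with sup_x |g(x) − h(x)| < η. Suppose σ satisfies Assumption (B). Then for all Borel probability measures P, Q on X: STV_{H,σ}(P,Q) = TV(P,Q), and moreover lim_{U→∞} STV_{H_U,σ}(P,Q) = TV(P,Q), where H_U := {f ∈ H : ‖f‖ ≤ U}. -/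
/-!
`STV ≤ TV` holds for any class of measurable functions: each `σ (u - b)` takes values in
`[0, 1]`, and on a Hahn set of `P - Q` such a function gains at most what the indicator of that
set gains. Conversely, fix a measurable `A`. Regularity of `P + Q` and Urysohn's lemma give a
bounded continuous `w` equal to `c` on `A` and to `-c` off `A`, outside a set of small mass. A
universal `u` within `1` of `w` then keeps `σ ∘ u` within `1 - σ (c - 1)` of the indicator of
`A` there, so `∫ σ ∘ u ∂P - ∫ σ ∘ u ∂Q` approximates `P A - Q A`. The approximating
`u = ⟪h, φ ·⟫` lies in every ball of radius at least `‖h‖`, which gives the limit.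
-/

open MeasureTheory Filter
open scoped ENNReal NNReal

noncomputable def TV {X : Type*} [MeasurableSpace X] (P Q : Measure X) : ℝ :=
  ⨆ A : {A : Set X // MeasurableSet A}, |(P A.1).toReal - (Q A.1).toReal|

noncomputable def STV {X : Type*} [MeasurableSpace X] (𝒰 : Set (X → ℝ)) (σ : ℝ → ℝ)
    (P Q : Measure X) : ℝ :=
  ⨆ ub : 𝒰 × ℝ, |∫ x, σ (ub.1.1 x - ub.2) ∂P - ∫ x, σ (ub.1.1 x - ub.2) ∂Q|

noncomputable def stepFun : ℝ → ℝ := fun x => if 0 ≤ x then 1 else 0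

noncomputable def sigmoid : ℝ → ℝ := fun z => 1 / (1 + Real.exp (-z))

def AssumptionB (σ : ℝ → ℝ) : Prop :=
  Continuous σ ∧ StrictMono σ ∧ Tendsto σ atBot (nhds 0) ∧ Tendsto σ atTop (nhds 1) ∧
    ∀ z, σ z + σ (-z) = 1

def DecayRate (σ : ℝ → ℝ) (C₀ : ℝ) (lam : ℝ → ℝ) : Prop :=
  Tendsto lam atTop (nhds 0) ∧ ∀ c, C₀ < c → ∀ t, 1 ≤ t → σ (-(c * Real.log t)) * (t - 1) ≤ lam c

noncomputable def evalH {X H : Type*} [NormedAddCommGroup H] [InnerProductSpace ℝ H]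
    (φ : X → H) (f : H) : X → ℝ := fun x => (inner ℝ f (φ x) : ℝ)

noncomputable def ballFuns {X H : Type*} [NormedAddCommGroup H] [InnerProductSpace ℝ H]
    (φ : X → H) (U : ℝ) : Set (X → ℝ) := evalH φ '' {h : H | ‖h‖ ≤ U}

noncomputable def logPartition {X H : Type*} [MeasurableSpace X] [NormedAddCommGroup H]
    [InnerProductSpace ℝ H] (μ : Measure X) (φ : X → H) (f : H) : ℝ :=
  Real.log (∫ x, Real.exp (evalH φ f x) ∂μ)

noncomputable def Pexp {X H : Type*} [MeasurableSpace X] [NormedAddCommGroup H]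
    [InnerProductSpace ℝ H] (μ : Measure X) (φ : X → H) (f : H) : Measure X :=
  μ.withDensity fun x => ENNReal.ofReal (Real.exp (evalH φ f x - logPartition μ φ f))

noncomputable def empMeasure {X : Type*} [MeasurableSpace X] {n : ℕ} (xs : Fin n → X) : Measure X :=
  (n : ℝ≥0∞)⁻¹ • ∑ i, Measure.dirac (xs i)

noncomputable def STVb {X : Type*} [MeasurableSpace X] (𝒰 : Set (X → ℝ)) (σ : ℝ → ℝ) (U : ℝ)
    (P Q : Measure X) : ℝ :=
  ⨆ ub : 𝒰 × {b : ℝ // |b| ≤ U}, |∫ x, σ (ub.1.1 x - ub.2.1) ∂P - ∫ x, σ (ub.1.1 x - ub.2.1) ∂Q|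

open Set
open TopologicalSpace
open scoped BoundedContinuousFunction

section TotalVariation

variable {X : Type*} [MeasurableSpace X] (P Q : Measure X)

theorem TV_comm : TV P Q = TV Q P := by
  simp only [TV, abs_sub_comm]

variable [IsProbabilityMeasure P] [IsProbabilityMeasure Q]

theorem abs_sub_le_TV {A : Set X} (hA : MeasurableSet A) :
    |P.real A - Q.real A| ≤ TV P Q := by
  refine le_ciSup (f := fun A : {A : Set X // MeasurableSet A} =>
    |(P A.1).toReal - (Q A.1).toReal|) ⟨1, ?_⟩ ⟨A, hA⟩
  rintro _ ⟨B, rfl⟩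
  exact abs_sub_le_of_nonneg_of_le ENNReal.toReal_nonneg measureReal_le_one
    ENNReal.toReal_nonneg measureReal_le_one

theorem integrable_of_mem_Icc (μ : Measure X) [IsFiniteMeasure μ] {f : X → ℝ}
    (hf : Measurable f) (hf01 : ∀ x, f x ∈ Icc 0 1) : Integrable f μ :=
  .of_bound hf.aestronglyMeasurable 1 (ae_of_all _ fun x =>
    abs_le.2 ⟨by linarith [(hf01 x).1], (hf01 x).2⟩)

theorem abs_integral_sub_measureReal_le (ν : Measure X) [IsProbabilityMeasure ν] {f : X → ℝ}
    (hf : Measurable f) (hf01 : ∀ x, f x ∈ Icc 0 1) {A E : Set X} (hA : MeasurableSet A)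
    (hE : MeasurableSet E) {η : ℝ} (hη : 0 ≤ η) (hfA : ∀ x ∉ E, |f x - A.indicator 1 x| ≤ η) :
    |∫ x, f x ∂ν - ν.real A| ≤ η + ν.real E := by
  have hfi := integrable_of_mem_Icc ν hf hf01
  have hAi : Integrable (A.indicator (1 : X → ℝ)) ν := (integrable_const 1).indicator hA
  have hEi : Integrable (E.indicator (1 : X → ℝ)) ν := (integrable_const 1).indicator hE
  have hbound : ∀ x, |f x - A.indicator 1 x| ≤ η + E.indicator 1 x := by
    intro x
    by_cases hxE : x ∈ E
    · have hA01 : A.indicator (1 : X → ℝ) x ∈ Icc 0 1 := by by_cases hxA : x ∈ A <;> simp [hxA]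
      rw [indicator_of_mem hxE, Pi.one_apply]
      linarith [abs_sub_le_of_nonneg_of_le (hf01 x).1 (hf01 x).2 hA01.1 hA01.2]
    · simpa [indicator_of_notMem hxE] using hfA x hxE
  calc |∫ x, f x ∂ν - ν.real A| = |∫ x, (f x - A.indicator 1 x) ∂ν| := by
        rw [integral_sub hfi hAi, integral_indicator_one hA]
    _ ≤ ∫ x, |f x - A.indicator 1 x| ∂ν := abs_integral_le_integral_abs
    _ ≤ ∫ x, (η + E.indicator 1 x) ∂ν :=
        integral_mono (hfi.sub hAi).abs ((integrable_const η).add hEi) hbound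
    _ = η + ν.real E := by simp [integral_add (integrable_const η) hEi, integral_indicator_one hE]

theorem integral_sub_integral_le_TV {f : X → ℝ} (hf : Measurable f)
    (hf01 : ∀ x, f x ∈ Icc 0 1) :
    ∫ x, f x ∂P - ∫ x, f x ∂Q ≤ TV P Q := by
  obtain ⟨s, hs, hQP, hPQ⟩ := exists_isHahnDecomposition Q P
  have hfP := integrable_of_mem_Icc P hf hf01
  have hfQ := integrable_of_mem_Icc Q hf hf01
  have hgf (x : X) : 1 - f x ∈ Icc 0 1 := ⟨by linarith [(hf01 x).2], by linarith [(hf01 x).1]⟩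
  have hg : Measurable fun x => 1 - f x := measurable_const.sub hf
  have on_s : ∫ x in s, (1 - f x) ∂Q ≤ ∫ x in s, (1 - f x) ∂P :=
    integral_mono_measure hQP (ae_of_all _ fun x => (hgf x).1)
      (integrable_of_mem_Icc P hg hgf).restrict
  have on_compl : ∫ x in sᶜ, f x ∂P ≤ ∫ x in sᶜ, f x ∂Q :=
    integral_mono_measure hPQ (ae_of_all _ fun x => (hf01 x).1) hfQ.restrict
  have hs_TV : P.real s - Q.real s ≤ TV P Q := (le_abs_self _).trans (abs_sub_le_TV P Q hs)
  rw [integral_sub (integrable_const _) hfP.restrict,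
    integral_sub (integrable_const _) hfQ.restrict, setIntegral_const, setIntegral_const, smul_eq_mul, smul_eq_mul, mul_one, mul_one] at on_s
  rw [← integral_add_compl hs hfP, ← integral_add_compl hs hfQ]
  linarith

theorem abs_integral_sub_integral_le_TV {f : X → ℝ} (hf : Measurable f)
    (hf01 : ∀ x, f x ∈ Icc 0 1) :
    |∫ x, f x ∂P - ∫ x, f x ∂Q| ≤ TV P Q :=
  abs_sub_le_iff.2 ⟨integral_sub_integral_le_TV P Q hf hf01,
    TV_comm P Q ▸ integral_sub_integral_le_TV Q P hf hf01⟩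

end TotalVariation

section SmoothedTotalVariation

variable {X : Type*} [MeasurableSpace X] {𝒰 : Set (X → ℝ)} {σ : ℝ → ℝ}
  (P Q : Measure X) [IsProbabilityMeasure P] [IsProbabilityMeasure Q]

theorem abs_integral_sub_integral_comp_le_TV (h𝒰 : ∀ u ∈ 𝒰, Measurable u) (hσm : Measurable σ)
    (hσ : ∀ z, σ z ∈ Icc 0 1) (ub : 𝒰 × ℝ) :
    |∫ x, σ (ub.1.1 x - ub.2) ∂P - ∫ x, σ (ub.1.1 x - ub.2) ∂Q| ≤ TV P Q :=
  abs_integral_sub_integral_le_TV P Q (hσm.comp ((h𝒰 _ ub.1.2).sub measurable_const)) fun _ => hσ _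

theorem STV_le_TV (h𝒰 : ∀ u ∈ 𝒰, Measurable u) (hσm : Measurable σ) (hσ : ∀ z, σ z ∈ Icc 0 1) :
    STV 𝒰 σ P Q ≤ TV P Q :=
  Real.iSup_le (abs_integral_sub_integral_comp_le_TV P Q h𝒰 hσm hσ)
    ((abs_nonneg _).trans (abs_sub_le_TV P Q .empty))

theorem abs_integral_sub_integral_le_STV (h𝒰 : ∀ u ∈ 𝒰, Measurable u) (hσm : Measurable σ)
    (hσ : ∀ z, σ z ∈ Icc 0 1) {u : X → ℝ} (hu : u ∈ 𝒰) :
    |∫ x, σ (u x) ∂P - ∫ x, σ (u x) ∂Q| ≤ STV 𝒰 σ P Q := by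
  simpa [STV] using le_ciSup ⟨TV P Q, forall_mem_range.2 <|
    abs_integral_sub_integral_comp_le_TV P Q h𝒰 hσm hσ⟩ (⟨⟨u, hu⟩, 0⟩ : 𝒰 × ℝ)

end SmoothedTotalVariation

namespace AssumptionB

variable {σ : ℝ → ℝ}

theorem mem_Ioo (hB : AssumptionB σ) (z : ℝ) : σ z ∈ Ioo 0 1 :=
  ⟨(hB.2.1.monotone.le_of_tendsto hB.2.2.1 (z - 1)).trans_lt (hB.2.1 (by linarith)),
    (hB.2.1 (by linarith : z < z + 1)).trans_le (hB.2.1.monotone.ge_of_tendsto hB.2.2.2.1 _)⟩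

theorem mem_Icc (hB : AssumptionB σ) (z : ℝ) : σ z ∈ Icc 0 1 :=
  Ioo_subset_Icc_self (hB.mem_Ioo z)

theorem measurable (hB : AssumptionB σ) : Measurable σ :=
  hB.1.measurable

theorem apply_neg (hB : AssumptionB σ) (z : ℝ) : σ (-z) = 1 - σ z := by
  linarith [hB.2.2.2.2 z]

theorem exists_one_sub_le (hB : AssumptionB σ) {η : ℝ} (hη : 0 < η) :
    ∃ c, 0 ≤ c ∧ 1 - σ (c - 1) ≤ η := by
  obtain ⟨t, ht, ht0⟩ := ((hB.2.2.2.1.eventually (Ici_mem_nhds (by linarith : 1 - η < 1))).and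
    (eventually_ge_atTop 0)).exists
  exact ⟨t + 1, by linarith, by simp only [add_sub_cancel_right]; linarith⟩

end AssumptionB

section Approximation

variable {X : Type*} [TopologicalSpace X] [MeasurableSpace X]

theorem MeasurableSet.exists_bcf_eq_off_measure_lt [NormalSpace X] [OpensMeasurableSpace X]
    (μ : Measure X) [IsFiniteMeasure μ] [μ.WeaklyRegular] {A : Set X} (hA : MeasurableSet A)
    {δ : ℝ≥0∞} (hδ : δ ≠ 0) {a b : ℝ} (hab : a ≤ b) :
    ∃ (w : X →ᵇ ℝ) (E : Set X), MeasurableSet E ∧ μ E < δ ∧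
      ∀ x ∉ E, (x ∈ A → w x = b) ∧ (x ∉ A → w x = a) := by
  have hδ2 : δ / 2 ≠ 0 := (ENNReal.half_pos hδ).ne'
  obtain ⟨F, hFA, hF, hAF⟩ := hA.exists_isClosed_sdiff_lt (measure_ne_top μ A) hδ2
  obtain ⟨G, hAG, hG, -, hGA⟩ := hA.exists_isOpen_sdiff_lt (measure_ne_top μ A) hδ2
  obtain ⟨w, hwG, hwF, -⟩ := exists_bounded_mem_Icc_of_closed_of_le hG.isClosed_compl hF
    (disjoint_compl_left.mono_right (hFA.trans hAG)) hab
  refine ⟨w, G \ F, hG.measurableSet.diff hF.measurableSet, ?_,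
    fun x hx => ⟨fun hxA => ?_, fun hxA => ?_⟩⟩
  · calc μ (G \ F) ≤ μ (G \ A) + μ (A \ F) :=
          (measure_mono (sdiff_triangle G A F)).trans (measure_union_le _ _)
      _ < δ / 2 + δ / 2 := ENNReal.add_lt_add hGA hAF
      _ = δ := ENNReal.add_halves δ
  · exact hwF (by_contra fun hxF => hx ⟨hAG hxA, hxF⟩)
  · exact hwG fun hxG => hx ⟨hxG, fun hxF => hxA (hFA hxF)⟩

end Approximation

section Universal

variable {X : Type*} [TopologicalSpace X] [MeasurableSpace X] {σ : ℝ → ℝ} {𝒰 : Set (X → ℝ)}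

def IsUniversal (𝒰 : Set (X → ℝ)) : Prop :=
  ∀ (g : X →ᵇ ℝ) (η : ℝ), 0 < η → ∃ u ∈ 𝒰, ∀ x, |g x - u x| < η

theorem AssumptionB.exists_abs_comp_sub_indicator_le [NormalSpace X] [OpensMeasurableSpace X]
    (hB : AssumptionB σ) (h𝒰 : IsUniversal 𝒰)
    (μ : Measure X) [IsFiniteMeasure μ] [μ.WeaklyRegular] {A : Set X} (hA : MeasurableSet A)
    {δ : ℝ≥0∞} (hδ : δ ≠ 0) {η : ℝ} (hη : 0 < η) :
    ∃ u ∈ 𝒰, ∃ E, MeasurableSet E ∧ μ E < δ ∧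
      ∀ x ∉ E, |σ (u x) - A.indicator 1 x| ≤ η := by
  obtain ⟨c, hc0, hc⟩ := hB.exists_one_sub_le hη
  obtain ⟨w, E, hE, hμE, hwE⟩ := hA.exists_bcf_eq_off_measure_lt μ hδ (neg_le_self hc0)
  obtain ⟨u, hu, hwu⟩ := h𝒰 w 1 one_pos
  refine ⟨u, hu, E, hE, hμE, fun x hx => ?_⟩
  have hσ := hB.mem_Ioo (u x)
  have hwux := abs_lt.1 (hwu x)
  by_cases hxA : x ∈ A
  · have : σ (c - 1) ≤ σ (u x) := hB.2.1.monotone (by linarith [(hwE x hx).1 hxA])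
    rw [indicator_of_mem hxA, Pi.one_apply, abs_sub_comm, abs_of_nonneg (by linarith [hσ.2])]
    linarith
  · have : σ (u x) ≤ σ (-(c - 1)) := hB.2.1.monotone (by linarith [(hwE x hx).2 hxA])
    rw [indicator_of_notMem hxA, sub_zero, abs_of_pos hσ.1]
    linarith [hB.apply_neg (c - 1)]

theorem AssumptionB.exists_TV_sub_lt [PseudoMetrizableSpace X] [BorelSpace X]
    (hB : AssumptionB σ) (h𝒰m : ∀ u ∈ 𝒰, Measurable u) (h𝒰 : IsUniversal 𝒰)
    (P Q : Measure X) [IsProbabilityMeasure P] [IsProbabilityMeasure Q] {ε : ℝ} (hε : 0 < ε) :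
    ∃ u ∈ 𝒰, TV P Q - ε < |∫ x, σ (u x) ∂P - ∫ x, σ (u x) ∂Q| := by
  obtain ⟨⟨A, hA⟩, hTV⟩ := exists_lt_of_lt_ciSup (show TV P Q - ε / 2 < TV P Q by linarith)
  obtain ⟨u, hu, E, hE, hμE, hσu⟩ := hB.exists_abs_comp_sub_indicator_le h𝒰 (P + Q) hA
    (ENNReal.ofReal_pos.2 (by positivity : 0 < ε / 4)).ne' (by positivity : 0 < ε / 8)
  have hf : Measurable fun x => σ (u x) := hB.measurable.comp (h𝒰m u hu)
  have hP := abs_integral_sub_measureReal_le P hf (fun _ => hB.mem_Icc _) hA hE (by positivity) hσu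
  have hQ := abs_integral_sub_measureReal_le Q hf (fun _ => hB.mem_Icc _) hA hE (by positivity) hσu
  have hPQE : P.real E + Q.real E < ε / 4 := by
    rw [← measureReal_add_apply]; exact ENNReal.toReal_lt_of_lt_ofReal hμE
  refine ⟨u, hu, ?_⟩
  have : |P.real A - Q.real A| ≤ |∫ x, σ (u x) ∂P - ∫ x, σ (u x) ∂Q| +
      |∫ x, σ (u x) ∂P - P.real A| + |∫ x, σ (u x) ∂Q - Q.real A| := by
    simpa [abs_sub_comm (∫ x, σ (u x) ∂P)] using
      abs_add_three (∫ x, σ (u x) ∂P - ∫ x, σ (u x) ∂Q) (P.real A - ∫ x, σ (u x) ∂P)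
        (∫ x, σ (u x) ∂Q - Q.real A)
  change TV P Q - ε / 2 < |P.real A - Q.real A| at hTV
  linarith

theorem AssumptionB.STV_eq_TV [PseudoMetrizableSpace X] [BorelSpace X]
    (hB : AssumptionB σ) (h𝒰m : ∀ u ∈ 𝒰, Measurable u) (h𝒰 : IsUniversal 𝒰)
    (P Q : Measure X) [IsProbabilityMeasure P] [IsProbabilityMeasure Q] :
    STV 𝒰 σ P Q = TV P Q := by
  refine le_antisymm (STV_le_TV P Q h𝒰m hB.measurable hB.mem_Icc) (le_of_forall_lt fun a ha => ?_)
  obtain ⟨u, hu, hlt⟩ := hB.exists_TV_sub_lt h𝒰m h𝒰 P Q (sub_pos.2 ha)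
  rw [sub_sub_cancel] at hlt
  exact hlt.trans_le (abs_integral_sub_integral_le_STV P Q h𝒰m hB.measurable hB.mem_Icc hu)

end Universal

/-- `H` is the feature space: the RKHS of the paper is `range (evalH φ)`, with kernel
`k x y = ⟪φ x, φ y⟫`. -/
theorem stv_universal_rkhs_eq_tv {X : Type*} [TopologicalSpace X] [PolishSpace X]
    [MeasurableSpace X] [BorelSpace X]
    {H : Type*} [NormedAddCommGroup H] [InnerProductSpace ℝ H]
    (φ : X → H) (hφ : Continuous φ)
    (huniv : ∀ (g : BoundedContinuousFunction X ℝ) (η : ℝ), 0 < η →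
      ∃ h : H, ∀ x, |g x - evalH φ h x| < η)
    (σ : ℝ → ℝ) (hB : AssumptionB σ)
    (P Q : Measure X) [IsProbabilityMeasure P] [IsProbabilityMeasure Q] :
    STV (Set.range (evalH φ)) σ P Q = TV P Q ∧
      Tendsto (fun U : ℝ => STV (ballFuns φ U) σ P Q) atTop (nhds (TV P Q)) := by
  have hmeas (h : H) : Measurable (evalH φ h) := (continuous_const.inner hφ).measurable
  have hrange : ∀ u ∈ range (evalH φ), Measurable u := forall_mem_range.2 hmeas
  have hball (U : ℝ) : ∀ u ∈ ballFuns φ U, Measurable u := forall_mem_image.2 fun h _ => hmeas h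
  have hdense : IsUniversal (range (evalH φ)) := fun g η hη => exists_range_iff.2 (huniv g η hη)
  refine ⟨hB.STV_eq_TV hrange hdense P Q, tendsto_order.2 ⟨fun a ha => ?_, fun a ha =>
    .of_forall fun U => (STV_le_TV P Q (hball U) hB.measurable hB.mem_Icc).trans_lt ha⟩⟩
  obtain ⟨_, ⟨h, rfl⟩, hlt⟩ := hB.exists_TV_sub_lt hrange hdense P Q (sub_pos.2 ha)
  rw [sub_sub_cancel] at hlt
  filter_upwards [eventually_ge_atTop ‖h‖] with U hU
  exact hlt.trans_le
    (abs_integral_sub_integral_le_STV P Q (hball U) hB.measurable hB.mem_Icc ⟨h, hU, rfl⟩)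
end

section
/- Let σ satisfy Assumption (B) and let λ be a decay rate of σ (with constant C₀ > 0). Then liminf_{c→∞} c·λ(c) > 0; in particular the decay rate of any such σ cannot be of order smaller than 1/c. -/
open MeasureTheory Filter
open scoped ENNReal NNReal

open Topology

theorem StrictMono.pos_of_tendsto_atBot {α : Type*} [LinearOrder α] [NoMinOrder α]
    {f : α → ℝ} (hf : StrictMono f) (h : Tendsto f atBot (𝓝 0)) (x : α) : 0 < f x :=
  let ⟨y, hy⟩ := exists_lt x
  (hf.monotone.le_of_tendsto h y).trans_lt (hf hy)

-- Test the decay-rate bound at `t = exp (1 / c)`, where `c * log t = 1` and `t - 1 ≥ 1 / c`.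
theorem DecayRate.div_le {σ lam : ℝ → ℝ} {C₀ c : ℝ} (hlam : DecayRate σ C₀ lam)
    (hσ : 0 ≤ σ (-1)) (hc : C₀ < c) (hc0 : 0 < c) : σ (-1) / c ≤ lam c := by
  have key := hlam.2 c hc _ (Real.one_le_exp (by positivity : 0 ≤ 1 / c))
  rw [Real.log_exp, mul_one_div_cancel hc0.ne'] at key
  calc σ (-1) / c = σ (-1) * (1 / c) := (mul_one_div _ _).symm
    _ ≤ σ (-1) * (Real.exp (1 / c) - 1) := by
      gcongr
      linarith [Real.add_one_le_exp (1 / c)]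
    _ ≤ lam c := key

theorem decay_rate_liminf_pos_general (σ : ℝ → ℝ) (hB : AssumptionB σ)
    (C₀ : ℝ) (lam : ℝ → ℝ) (hlam : DecayRate σ C₀ lam) :
    ∃ a : ℝ, 0 < a ∧ ∀ᶠ c in atTop, a ≤ c * lam c := by
  obtain ⟨-, hmono, hbot, -, -⟩ := hB
  have hpos : 0 < σ (-1) := hmono.pos_of_tendsto_atBot hbot (-1)
  refine ⟨σ (-1), hpos, ?_⟩
  filter_upwards [eventually_gt_atTop C₀, eventually_gt_atTop 0] with c hc hc0
  have hbound := hlam.div_le hpos.le hc hc0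
  rwa [div_le_iff₀ hc0, mul_comm] at hbound

/-- for any `σ` satisfying Assumption (B) with decay rate `lam`, we have
`liminf_{c→∞} c·lam(c) > 0`, expressed as: there is `a > 0` with `a ≤ c·lam(c)` for all
sufficiently large `c`; so the decay rate cannot be of order smaller than `1/c`. -/
theorem decay_rate_liminf_pos (σ : ℝ → ℝ) (hB : AssumptionB σ)
    (C₀ : ℝ) (hC₀ : 0 < C₀) (lam : ℝ → ℝ) (hlam : DecayRate σ C₀ lam) :
    ∃ a : ℝ, 0 < a ∧ ∀ᶠ c in atTop, a ≤ c * lam c :=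
  decay_rate_liminf_pos_general σ hB C₀ lam hlam
end

section
/- Let σ(z) = 1/(1+e^{−z}) be the sigmoid function. Then for every real c > 1 and every t ≥ 1, σ(−c·log t)·(t−1) = (t−1)/(1+t^c) ≤ 1/c. Consequently λ(c) = 1/c, c > 1, is a decay rate of the sigmoid function. -/
open MeasureTheory Filter
open scoped ENNReal NNReal

/-! With `t ^ c = exp (c log t)` the sigmoid turns into `1 / (1 + t ^ c)`, and Bernoulli's
inequality `1 + c (t - 1) ≤ t ^ c` gives `c (t - 1) ≤ 1 + t ^ c`. -/

lemma sigmoid_neg_mul_log {t : ℝ} (ht : 0 < t) (c : ℝ) :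
    sigmoid (-(c * Real.log t)) = 1 / (1 + t ^ c) := by
  rw [sigmoid, neg_neg, Real.rpow_def_of_pos ht, mul_comm]

lemma sub_one_div_one_add_rpow_le {c t : ℝ} (hc : 1 ≤ c) (ht : 0 ≤ t) :
    (t - 1) / (1 + t ^ c) ≤ 1 / c := by
  have hbernoulli : 1 + c * (t - 1) ≤ t ^ c := by
    simpa using one_add_mul_self_le_rpow_one_add (s := t - 1) (by linarith) hc
  rw [div_le_div_iff₀ (by positivity) (by linarith)]
  linarith

/-- for the sigmoid function, `σ(-c log t)·(t-1) = (t-1)/(1+t^c) ≤ 1/c` for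
all `c > 1` and `t ≥ 1`; consequently `λ(c) = 1/c` is a decay rate of the sigmoid. -/
theorem sigmoid_decay_rate :
    (∀ c : ℝ, 1 < c → ∀ t : ℝ, 1 ≤ t →
      sigmoid (-(c * Real.log t)) * (t - 1) = (t - 1) / (1 + t ^ c) ∧
        sigmoid (-(c * Real.log t)) * (t - 1) ≤ 1 / c) ∧
      DecayRate sigmoid 1 (fun c => 1 / c) := by
  have hbound : ∀ c : ℝ, 1 < c → ∀ t : ℝ, 1 ≤ t →
      sigmoid (-(c * Real.log t)) * (t - 1) = (t - 1) / (1 + t ^ c) ∧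
        sigmoid (-(c * Real.log t)) * (t - 1) ≤ 1 / c := by
    intro c hc t ht
    have hformula : sigmoid (-(c * Real.log t)) * (t - 1) = (t - 1) / (1 + t ^ c) := by
      rw [sigmoid_neg_mul_log (by linarith) c, one_div_mul_eq_div]
    exact ⟨hformula, hformula ▸ sub_one_div_one_add_rpow_le hc.le (by linarith)⟩
  refine ⟨hbound, ?_, fun c hc t ht => (hbound c hc t ht).2⟩
  simpa only [one_div] using tendsto_inv_atTop_zero
end

section
/- Let H be an RKHS of real-valued functions on X with kernel k, μ a Borel measure on X, and f, g ∈ H with ∫ e^{f} dμ < ∞ and ∫ e^{g} dμ < ∞, defining P_f, P_g in the kernel exponential family. Then for every U > 0, STV_{H_U,𝟙}(P_f, P_g) = TV(P_f, P_g). -/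
/-! Every step-function test `x ↦ 𝟙(u x - b)` integrates to the mass of the measurable set
`{b ≤ u}`, so STV is at most TV. Conversely, by Scheffé's argument the supremum defining TV is
attained at `{p_g ≤ p_f}`. In the exponential family this set is
`{x | t (A f - A g) ≤ ⟪t (f - g), φ x⟫}` for every `t > 0`, a superlevel set of a function in
`H_U` once `t` is small. -/

open MeasureTheory Filter
open scoped ENNReal NNReal

section TotalVariation

variable {X : Type*} [MeasurableSpace X] {P Q : Measure X}

lemma integral_stepFun_sub {u : X → ℝ} (hu : Measurable u) (b : ℝ) :
    ∫ x, stepFun (u x - b) ∂P = P.real {x | b ≤ u x} := by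
  rw [← integral_indicator_one (measurableSet_le measurable_const hu)]
  congr 1 with x
  by_cases h : b ≤ u x <;> simp [stepFun, h]

lemma TV_nonneg : 0 ≤ TV P Q :=
  Real.iSup_nonneg fun _ => abs_nonneg _

lemma abs_measureReal_sub_le_TV [IsFiniteMeasure P] [IsFiniteMeasure Q] {A : Set X}
    (hA : MeasurableSet A) : |P.real A - Q.real A| ≤ TV P Q := by
  refine le_ciSup (f := fun A : {A : Set X // MeasurableSet A} => |P.real A - Q.real A|)
    ⟨P.real .univ + Q.real .univ, Set.forall_mem_range.2 fun B => ?_⟩ ⟨A, hA⟩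
  exact abs_sub_le_of_nonneg_of_le measureReal_nonneg
    (le_add_of_le_of_nonneg (measureReal_mono (Set.subset_univ _)) measureReal_nonneg)
    measureReal_nonneg
    (le_add_of_nonneg_of_le measureReal_nonneg (measureReal_mono (Set.subset_univ _)))

lemma abs_integral_stepFun_sub_le_TV [IsFiniteMeasure P] [IsFiniteMeasure Q] {u : X → ℝ}
    (hu : Measurable u) (b : ℝ) :
    |∫ x, stepFun (u x - b) ∂P - ∫ x, stepFun (u x - b) ∂Q| ≤ TV P Q := by
  rw [integral_stepFun_sub hu, integral_stepFun_sub hu]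
  exact abs_measureReal_sub_le_TV (measurableSet_le measurable_const hu)

variable [IsFiniteMeasure P] [IsFiniteMeasure Q] {𝒰 : Set (X → ℝ)}

lemma STV_stepFun_le_TV (h𝒰 : ∀ u ∈ 𝒰, Measurable u) : STV 𝒰 stepFun P Q ≤ TV P Q :=
  Real.iSup_le (fun ub => abs_integral_stepFun_sub_le_TV (h𝒰 _ ub.1.2) ub.2) TV_nonneg

lemma TV_le_STV_stepFun (h𝒰 : ∀ u ∈ 𝒰, Measurable u) {u : X → ℝ} (hu : u ∈ 𝒰) (b : ℝ)
    (hmax : ∀ A, MeasurableSet A →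
      |P.real A - Q.real A| ≤ |P.real {x | b ≤ u x} - Q.real {x | b ≤ u x}|) :
    TV P Q ≤ STV 𝒰 stepFun P Q := by
  have hbdd : BddAbove (Set.range fun ub : 𝒰 × ℝ =>
      |∫ x, stepFun (ub.1.1 x - ub.2) ∂P - ∫ x, stepFun (ub.1.1 x - ub.2) ∂Q|) :=
    ⟨TV P Q, Set.forall_mem_range.2 fun ub => abs_integral_stepFun_sub_le_TV (h𝒰 _ ub.1.2) ub.2⟩
  calc TV P Q ≤ |P.real {x | b ≤ u x} - Q.real {x | b ≤ u x}| :=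
        Real.iSup_le (fun A => hmax A.1 A.2) (abs_nonneg _)
    _ = |∫ x, stepFun (u x - b) ∂P - ∫ x, stepFun (u x - b) ∂Q| := by
        rw [integral_stepFun_sub (h𝒰 u hu), integral_stepFun_sub (h𝒰 u hu)]
    _ ≤ STV 𝒰 stepFun P Q := le_ciSup hbdd (⟨⟨u, hu⟩, b⟩ : 𝒰 × ℝ)

end TotalVariation

section Scheffe

variable {X : Type*} [MeasurableSpace X] {μ : Measure X}

lemma abs_setIntegral_le_setIntegral_nonneg {D : X → ℝ} (hDm : StronglyMeasurable D)
    (hD : Integrable D μ) (hD0 : ∫ x, D x ∂μ = 0) {A : Set X} (hA : MeasurableSet A) :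
    |∫ x in A, D x ∂μ| ≤ ∫ x in {y | 0 ≤ D y}, D x ∂μ := by
  have hsplit := integral_add_compl hA hD
  have hcompl := setIntegral_le_nonneg hA.compl hDm hD
  exact abs_le.2 ⟨by linarith, setIntegral_le_nonneg hA hDm hD⟩

lemma withDensity_ofReal_real_apply {p : X → ℝ} (hp : Integrable p μ) (hp0 : 0 ≤ p)
    {A : Set X} (hA : MeasurableSet A) :
    (μ.withDensity fun x => ENNReal.ofReal (p x)).real A = ∫ x in A, p x ∂μ := by
  rw [measureReal_def, withDensity_apply _ hA,
    ← ofReal_integral_eq_lintegral_ofReal hp.integrableOn (ae_of_all _ hp0),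
    ENNReal.toReal_ofReal (setIntegral_nonneg hA fun x _ => hp0 x)]

lemma abs_withDensity_real_sub_le {p q : X → ℝ} (hpm : Measurable p) (hqm : Measurable q)
    (hp : Integrable p μ) (hq : Integrable q μ) (hp0 : 0 ≤ p) (hq0 : 0 ≤ q)
    (hpq : ∫ x, p x ∂μ = ∫ x, q x ∂μ) {A : Set X} (hA : MeasurableSet A) :
    let P := μ.withDensity fun x => ENNReal.ofReal (p x)
    let Q := μ.withDensity fun x => ENNReal.ofReal (q x)
    |P.real A - Q.real A| ≤ |P.real {x | q x ≤ p x} - Q.real {x | q x ≤ p x}| := by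
  intro P Q
  have hdiff : ∀ B, MeasurableSet B → P.real B - Q.real B = ∫ x in B, p x - q x ∂μ := fun B hB => by
    rw [withDensity_ofReal_real_apply hp hp0 hB, withDensity_ofReal_real_apply hq hq0 hB,
      integral_sub hp.integrableOn hq.integrableOn]
  have hS : {x | q x ≤ p x} = {x | 0 ≤ p x - q x} := by simp only [sub_nonneg]
  rw [hdiff A hA, hdiff _ (measurableSet_le hqm hpm), hS]
  exact (abs_setIntegral_le_setIntegral_nonneg (D := fun x => p x - q x)
    (hpm.sub hqm).stronglyMeasurable (hp.sub hq)
    (by rw [integral_sub hp hq, hpq, sub_self]) hA).trans (le_abs_self _)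

end Scheffe

lemma exists_pos_norm_smul_le {E : Type*} [SeminormedAddCommGroup E] [NormedSpace ℝ E] (v : E)
    {U : ℝ} (hU : 0 < U) : ∃ t : ℝ, 0 < t ∧ ‖t • v‖ ≤ U := by
  refine ⟨U / (‖v‖ + 1), by positivity, ?_⟩
  rw [norm_smul, Real.norm_of_nonneg (by positivity), div_mul_eq_mul_div,
    div_le_iff₀ (by positivity)]
  nlinarith [norm_nonneg v]

section KernelExponentialFamily

variable {X H : Type*} [NormedAddCommGroup H] [InnerProductSpace ℝ H] {φ : X → H}

lemma evalH_smul_sub (t : ℝ) (f g : H) (x : X) :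
    evalH φ (t • (f - g)) x = t * (evalH φ f x - evalH φ g x) := by
  simp only [evalH, real_inner_smul_left, inner_sub_left]

variable [MeasurableSpace X] {μ : Measure X} {f : H}

lemma integrable_exp_evalH_sub (hf : Integrable (fun x => Real.exp (evalH φ f x)) μ) (c : ℝ) :
    Integrable (fun x => Real.exp (evalH φ f x - c)) μ := by
  simpa only [Real.exp_sub] using hf.div_const (Real.exp c)

lemma integral_exp_evalH_sub_logPartition [NeZero μ]
    (hf : Integrable (fun x => Real.exp (evalH φ f x)) μ) :
    ∫ x, Real.exp (evalH φ f x - logPartition μ φ f) ∂μ = 1 := by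
  simp only [Real.exp_sub, integral_div, logPartition, Real.exp_log (integral_exp_pos hf)]
  exact div_self (integral_exp_pos hf).ne'

lemma isFiniteMeasure_Pexp (hf : Integrable (fun x => Real.exp (evalH φ f x)) μ) :
    IsFiniteMeasure (Pexp μ φ f) :=
  isFiniteMeasure_withDensity_ofReal (integrable_exp_evalH_sub hf _).2

end KernelExponentialFamily

/-- for members `P_f, P_g` of the kernel exponential family of the RKHS with
feature map `φ`, the STV distance with the step function over any ball `H_U`, `U > 0`,
equals the TV distance. -/
theorem stv_step_eq_tv_kernel_exp {X : Type*} [MeasurableSpace X]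
    {H : Type*} [NormedAddCommGroup H] [InnerProductSpace ℝ H]
    (φ : X → H) (hmeas : ∀ h : H, Measurable (evalH φ h))
    (μ : Measure X) (hμ : μ ≠ 0)
    (f g : H)
    (hf : Integrable (fun x => Real.exp (evalH φ f x)) μ)
    (hg : Integrable (fun x => Real.exp (evalH φ g x)) μ)
    (U : ℝ) (hU : 0 < U) :
    STV (ballFuns φ U) stepFun (Pexp μ φ f) (Pexp μ φ g) = TV (Pexp μ φ f) (Pexp μ φ g) := by
  have : NeZero μ := ⟨hμ⟩
  have := isFiniteMeasure_Pexp hf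
  have := isFiniteMeasure_Pexp hg
  have hball : ∀ u ∈ ballFuns φ U, Measurable u := by
    rintro _ ⟨h, -, rfl⟩
    exact hmeas h
  obtain ⟨t, ht, htU⟩ := exists_pos_norm_smul_le (f - g) hU
  have hscheffe : {x | Real.exp (evalH φ g x - logPartition μ φ g) ≤
      Real.exp (evalH φ f x - logPartition μ φ f)} =
      {x | t * (logPartition μ φ f - logPartition μ φ g) ≤ evalH φ (t • (f - g)) x} := by
    ext x
    rw [Set.mem_ofPred_eq, Set.mem_ofPred_eq, Real.exp_le_exp, evalH_smul_sub,
      mul_le_mul_iff_right₀ ht]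
    constructor <;> intro <;> linarith
  refine le_antisymm (STV_stepFun_le_TV hball)
    (TV_le_STV_stepFun hball ⟨_, htU, rfl⟩ (t * (logPartition μ φ f - logPartition μ φ g))
      fun A hA => ?_)
  rw [← hscheffe]
  exact abs_withDensity_real_sub_le (by fun_prop) (by fun_prop)
    (integrable_exp_evalH_sub hf _) (integrable_exp_evalH_sub hg _)
    (fun _ => (Real.exp_pos _).le) (fun _ => (Real.exp_pos _).le)
    (by rw [integral_exp_evalH_sub_logPartition hf, integral_exp_evalH_sub_logPartition hg]) hA
end

section
/- Let H be an RKHS on X with kernel k satisfying sup_{x∈X} k(x,x) ≤ K² < ∞, and let f, g ∈ H with ∫ e^{f} dμ < ∞ and ∫ e^{g} dμ < ∞. Then: (i) for every u ∈ H, lim_{t→0} (A(f+tu) − A(f))/t = ∫ u dP_f; (ii) ∫ (f−g) dP_g ≤ A(f) − A(g) ≤ ∫ (f−g) dP_f; and (iii) |A(f) − A(g)| ≤ K·‖f−g‖. -/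
open MeasureTheory Filter
open scoped ENNReal NNReal

/-!
Along the line `t ↦ f + t • u`, the log-partition function is `A(f)` plus the cumulant-generating
function of `u` under `P_f`, which is the exponential tilting `μ.tilted f`. A bounded kernel makes
every `u` a bounded function (`|u(x)| ≤ K ‖u‖`), so this cumulant-generating function is finite
everywhere and its derivative at `0` is the mean of `u` under `P_f`, which gives (i). Taking
`u = g - f`, `t = 1`, Jensen's inequality `t 𝔼[u] ≤ cgf(t)` and symmetry in `f`, `g` give (ii),
and (iii) follows because `|f - g| ≤ K ‖f - g‖` pointwise.
-/

open ProbabilityTheory Real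

section CumulantGeneratingFunction

variable {Ω : Type*} {mΩ : MeasurableSpace Ω} {μ : Measure Ω}

lemma integrableExpSet_eq_univ_of_abs_le [IsFiniteMeasure μ] {Y : Ω → ℝ} {C : ℝ}
    (hY : AEStronglyMeasurable Y μ) (hC : ∀ ω, |Y ω| ≤ C) :
    integrableExpSet Y μ = Set.univ := by
  refine Set.eq_univ_of_forall fun t => ?_
  refine Integrable.of_bound (continuous_exp.comp_aestronglyMeasurable (hY.const_mul t))
    (exp (|t| * C)) (ae_of_all _ fun ω => ?_)
  rw [norm_of_nonneg (exp_nonneg _), exp_le_exp]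
  calc t * Y ω ≤ |t * Y ω| := le_abs_self _
    _ = |t| * |Y ω| := abs_mul t (Y ω)
    _ ≤ |t| * C := mul_le_mul_of_nonneg_left (hC ω) (abs_nonneg t)

lemma hasDerivAt_cgf_zero [IsProbabilityMeasure μ] {Y : Ω → ℝ}
    (h : 0 ∈ interior (integrableExpSet Y μ)) : HasDerivAt (cgf Y μ) μ[Y] 0 := by
  have := (analyticAt_cgf h).differentiableAt.hasDerivAt
  rwa [deriv_cgf_zero h, probReal_univ, div_one] at this

lemma mul_integral_le_cgf [IsProbabilityMeasure μ] {Y : Ω → ℝ} {t : ℝ} (hY : Integrable Y μ)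
    (ht : Integrable (fun ω => exp (t * Y ω)) μ) : t * μ[Y] ≤ cgf Y μ t := by
  rw [cgf, le_log_iff_exp_le (mgf_pos ht), mgf, ← integral_const_mul]
  exact convexOn_exp.map_integral_le continuousOn_exp isClosed_univ (by simp) (hY.const_mul t) ht

lemma cgf_tilted [NeZero μ] {F G : Ω → ℝ} {t : ℝ} (hF : Integrable (fun ω => exp (F ω)) μ)
    (hFG : Integrable (fun ω => exp (F ω + t * G ω)) μ) :
    cgf G (μ.tilted F) t = log (∫ ω, exp (F ω + t * G ω) ∂μ) - log (∫ ω, exp (F ω) ∂μ) := by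
  rw [cgf, mgf, integral_exp_tilted F (fun ω => t * G ω)]
  exact log_div (integral_exp_pos hFG).ne' (integral_exp_pos hF).ne'

end CumulantGeneratingFunction

section FeatureMap

variable {X H : Type*} [NormedAddCommGroup H] [InnerProductSpace ℝ H] (φ : X → H)

lemma evalH_add_smul (f u : H) (t : ℝ) (x : X) :
    evalH φ (f + t • u) x = evalH φ f x + t * evalH φ u x := by
  simp [evalH, inner_add_left, real_inner_smul_left]

lemma evalH_sub (f g : H) (x : X) : evalH φ (f - g) x = evalH φ f x - evalH φ g x := by
  simp [evalH, inner_sub_left]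

lemma abs_evalH_le {K : ℝ} (hφ : ∀ x, ‖φ x‖ ≤ K) (f : H) (x : X) : |evalH φ f x| ≤ ‖f‖ * K :=
  (abs_real_inner_le_norm f (φ x)).trans (mul_le_mul_of_nonneg_left (hφ x) (norm_nonneg f))

end FeatureMap

section LogPartition

variable {X H : Type*} [MeasurableSpace X] [NormedAddCommGroup H] [InnerProductSpace ℝ H]
  {φ : X → H} {K : ℝ} {μ : Measure X} {f g u : H}

lemma Pexp_eq_tilted [NeZero μ] (hf : Integrable (fun x => exp (evalH φ f x)) μ) :
    Pexp μ φ f = μ.tilted (evalH φ f) := by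
  simp_rw [Pexp, Measure.tilted, logPartition, exp_sub, exp_log (integral_exp_pos hf)]

lemma isProbabilityMeasure_Pexp [NeZero μ] (hf : Integrable (fun x => exp (evalH φ f x)) μ) :
    IsProbabilityMeasure (Pexp μ φ f) := by
  rw [Pexp_eq_tilted hf]
  exact isProbabilityMeasure_tilted hf

lemma integrableExpSet_evalH (ν : Measure X) [IsFiniteMeasure ν] (hφ : ∀ x, ‖φ x‖ ≤ K)
    (hu : Measurable (evalH φ u)) : integrableExpSet (evalH φ u) ν = Set.univ :=
  integrableExpSet_eq_univ_of_abs_le hu.aestronglyMeasurable (abs_evalH_le φ hφ u)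

lemma logPartition_add_smul [NeZero μ] (hφ : ∀ x, ‖φ x‖ ≤ K) (hu : Measurable (evalH φ u))
    (hf : Integrable (fun x => exp (evalH φ f x)) μ) (t : ℝ) :
    logPartition μ φ (f + t • u) = logPartition μ φ f + cgf (evalH φ u) (Pexp μ φ f) t := by
  have hint : Integrable (fun x => exp (evalH φ f x + t * evalH φ u x)) μ := by
    have := isProbabilityMeasure_Pexp hf
    have ht : t ∈ integrableExpSet (evalH φ u) (Pexp μ φ f) := by
      simp [integrableExpSet_evalH _ hφ hu]
    rw [Pexp_eq_tilted hf, integrableExpSet, Set.mem_ofPred_eq, integrable_tilted_iff hf] at ht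
    simpa only [smul_eq_mul, ← exp_add] using ht
  rw [Pexp_eq_tilted hf, cgf_tilted hf hint, logPartition, logPartition]
  simp_rw [evalH_add_smul]
  ring

lemma hasDerivAt_logPartition_add_smul [NeZero μ] (hφ : ∀ x, ‖φ x‖ ≤ K)
    (hu : Measurable (evalH φ u)) (hf : Integrable (fun x => exp (evalH φ f x)) μ) :
    HasDerivAt (fun t : ℝ => logPartition μ φ (f + t • u)) (∫ x, evalH φ u x ∂Pexp μ φ f) 0 := by
  have := isProbabilityMeasure_Pexp hf
  simp_rw [logPartition_add_smul hφ hu hf]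
  exact (hasDerivAt_cgf_zero (by simp [integrableExpSet_evalH _ hφ hu])).const_add _

lemma integral_sub_le_logPartition_sub [NeZero μ] (hφ : ∀ x, ‖φ x‖ ≤ K)
    (hfg : Measurable (evalH φ (f - g))) (hg : Integrable (fun x => exp (evalH φ g x)) μ) :
    ∫ x, (evalH φ f x - evalH φ g x) ∂Pexp μ φ g ≤ logPartition μ φ f - logPartition μ φ g := by
  have := isProbabilityMeasure_Pexp hg
  have hexp := integrableExpSet_evalH (Pexp μ φ g) hφ hfg
  have hjensen := mul_integral_le_cgf (t := 1)
    (integrable_of_mem_interior_integrableExpSet (by simp [hexp])) (hexp ▸ Set.mem_univ 1)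
  have hline := logPartition_add_smul hφ hfg hg 1
  rw [one_smul, add_sub_cancel] at hline
  simp_rw [← evalH_sub]
  linarith

lemma logPartition_sub_le_integral_sub [NeZero μ] (hφ : ∀ x, ‖φ x‖ ≤ K)
    (hgf : Measurable (evalH φ (g - f))) (hf : Integrable (fun x => exp (evalH φ f x)) μ) :
    logPartition μ φ f - logPartition μ φ g ≤ ∫ x, (evalH φ f x - evalH φ g x) ∂Pexp μ φ f := by
  have hswap : ∫ x, (evalH φ g x - evalH φ f x) ∂Pexp μ φ f
      = -∫ x, (evalH φ f x - evalH φ g x) ∂Pexp μ φ f := by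
    rw [← integral_neg]
    simp_rw [neg_sub]
  linarith [integral_sub_le_logPartition_sub hφ hgf hf]

lemma abs_integral_evalH_sub_le (P : Measure X) [IsProbabilityMeasure P] (hφ : ∀ x, ‖φ x‖ ≤ K)
    (f g : H) : |∫ x, (evalH φ f x - evalH φ g x) ∂P| ≤ K * ‖f - g‖ := by
  have := norm_integral_le_of_norm_le_const (μ := P) (f := fun x => evalH φ f x - evalH φ g x)
    (ae_of_all _ fun x => by rw [norm_eq_abs, ← evalH_sub]; exact abs_evalH_le φ hφ (f - g) x)
  rwa [probReal_univ, mul_one, mul_comm] at this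

end LogPartition

/-- basic properties of the log-partition function `A` of the kernel
exponential family with bounded kernel `k(x,x) ≤ K²`: (i) the Gâteaux derivative of `A`
at `f` in direction `u` is `∫ u dP_f`; (ii) `∫ (f-g) dP_g ≤ A(f) - A(g) ≤ ∫ (f-g) dP_f`;
(iii) `|A(f) - A(g)| ≤ K·‖f-g‖`. -/
theorem logPartition_basic {X : Type*} [MeasurableSpace X]
    {H : Type*} [NormedAddCommGroup H] [InnerProductSpace ℝ H]
    (φ : X → H) (hmeas : ∀ h : H, Measurable (evalH φ h))
    (K : ℝ) (hK0 : 0 ≤ K) (hK : ∀ x, (inner ℝ (φ x) (φ x) : ℝ) ≤ K ^ 2)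
    (μ : Measure X) (hμ : μ ≠ 0)
    (f g : H)
    (hf : Integrable (fun x => Real.exp (evalH φ f x)) μ)
    (hg : Integrable (fun x => Real.exp (evalH φ g x)) μ) :
    (∀ u : H,
      Tendsto (fun t : ℝ => (logPartition μ φ (f + t • u) - logPartition μ φ f) / t)
        (nhdsWithin 0 {(0 : ℝ)}ᶜ) (nhds (∫ x, evalH φ u x ∂(Pexp μ φ f)))) ∧
      (∫ x, (evalH φ f x - evalH φ g x) ∂(Pexp μ φ g) ≤
          logPartition μ φ f - logPartition μ φ g ∧
        logPartition μ φ f - logPartition μ φ g ≤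
          ∫ x, (evalH φ f x - evalH φ g x) ∂(Pexp μ φ f)) ∧
      |logPartition μ φ f - logPartition μ φ g| ≤ K * ‖f - g‖ := by
  have : NeZero μ := ⟨hμ⟩
  have hφ : ∀ x, ‖φ x‖ ≤ K := fun x => (pow_le_pow_iff_left₀ (norm_nonneg _) hK0 two_ne_zero).1
    (real_inner_self_eq_norm_sq (φ x) ▸ hK x)
  have hlow := integral_sub_le_logPartition_sub hφ (hmeas (f - g)) hg
  have hupp := logPartition_sub_le_integral_sub hφ (hmeas (g - f)) hf
  refine ⟨fun u => ?_, ⟨hlow, hupp⟩, ?_⟩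
  · have hderiv := hasDerivAt_logPartition_add_smul hφ (hmeas u) hf
    simpa [div_eq_inv_mul] using hderiv.tendsto_slope_zero
  · have := isProbabilityMeasure_Pexp hf
    have := isProbabilityMeasure_Pexp hg
    have hPf := abs_integral_evalH_sub_le (Pexp μ φ f) hφ f g
    have hPg := abs_integral_evalH_sub_le (Pexp μ φ g) hφ f g
    rw [abs_le] at hPf hPg ⊢
    constructor <;> linarith
end
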